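/- Let h be a real random variable with a density symmetric about 0, and k an independent random variable with CDF Λ where Λ is symmetric (Λ(−x) = 1 − Λ(x)). Define U = h if k ≤ s·h and U = −h otherwise, for a fixed sign s ∈ {−1, +1}. Then U is distributed as h conditioned on the event {k ≤ s·h}. -/

import Mathlib

open MeasureTheory ProbabilityTheory Set

/-!
By independence, `P(k ≤ s h, h ∈ B) = ∫_B Λ(s x) dν(x)` and
`P(k > s h, -h ∈ B) = ∫_{-B} (1 - Λ(s x)) dν(x)`, where `ν` is the law of `h`. The substitution
`x ↦ -x` (symmetry of `ν`) and `1 - Λ(-y) = Λ(y)` turn the second integral into the first, so the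
flipped branch contributes exactly as much as the accepted one. For `B = ℝ` this gives
`P(k ≤ s h) = 1/2`, hence the law of `U` is twice the accepted part, i.e. the conditional law.
-/

section
variable {Ω α β : Type*} [MeasurableSpace Ω] [MeasurableSpace α] [MeasurableSpace β]
  {μ : Measure Ω}

theorem map_piecewise_eq_cond_map [IsProbabilityMeasure μ] {A : Set Ω} [DecidablePred (· ∈ A)]
    (hA : MeasurableSet A) {f g : Ω → β} (hf : Measurable f) (hg : Measurable g)
    (hfg : ∀ B, MeasurableSet B → μ (g ⁻¹' B \ A) = μ (f ⁻¹' B ∩ A)) :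
    μ.map (A.piecewise f g) = (μ[|A]).map f := by
  have hsplit : ∀ B, μ (A.piecewise f g ⁻¹' B) = μ (f ⁻¹' B ∩ A) + μ (g ⁻¹' B \ A) := by
    intro B
    rw [← measure_inter_add_sdiff _ hA, piecewise_preimage, ite_inter_self, ite_sdiff_self]
  have hhalf : μ A = 2⁻¹ := by
    have hsum := hsplit univ
    rw [hfg univ .univ, preimage_univ, preimage_univ, measure_univ, univ_inter, ← two_mul] at hsum
    exact ENNReal.eq_inv_of_mul_eq_one_left (by rw [hsum, mul_comm])
  ext B hB
  rw [Measure.map_apply (hf.piecewise hA hg) hB, Measure.map_apply hf hB, cond_apply hA,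
    hsplit, hfg B hB, hhalf, inv_inv, two_mul, inter_comm]

theorem ProbabilityTheory.IndepFun.measure_preimage_inter_preimage [IsFiniteMeasure μ]
    {X : Ω → α} {Y : Ω → β} (hX : Measurable X) (hY : Measurable Y) (hXY : IndepFun X Y μ)
    {S : Set (α × β)} (hS : MeasurableSet S) {B : Set α} (hB : MeasurableSet B) :
    μ ((fun ω => (X ω, Y ω)) ⁻¹' S ∩ X ⁻¹' B) =
      ∫⁻ x in B, μ.map Y (Prod.mk x ⁻¹' S) ∂μ.map X := by
  have hmap := (indepFun_iff_map_prod_eq_prod_map_map hX.aemeasurable hY.aemeasurable).mp hXY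
  have hpre : (fun ω => (X ω, Y ω)) ⁻¹' S ∩ X ⁻¹' B =
      (fun ω => (X ω, Y ω)) ⁻¹' (S ∩ B ×ˢ univ) := by
    ext ω; simp
  rw [hpre, ← Measure.map_apply (hX.prodMk hY) (hS.inter (hB.prod .univ)), hmap,
    ← Measure.restrict_apply' (hB.prod .univ), ← Measure.restrict_univ (μ := μ.map Y),
    ← Measure.prod_restrict, Measure.prod_apply hS, Measure.restrict_univ]

end

theorem setLIntegral_neg_eq {G : Type*} [InvolutiveNeg G] [MeasurableSpace G] [MeasurableNeg G]
    {ν : Measure G} (hν : MeasurePreserving Neg.neg ν ν) (F : G → ENNReal) (B : Set G) :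
    ∫⁻ x in -B, F x ∂ν = ∫⁻ x in B, F (-x) ∂ν := by
  have := hν.setLIntegral_comp_preimage_emb measurableEmbedding_neg (F <| -·) B
  simp only [neg_neg] at this
  exact this

theorem measure_Ioi_neg_eq_measure_Iic {κ : Measure ℝ} [IsProbabilityMeasure κ]
    (hκ : ∀ x, κ.real (Iic (-x)) = 1 - κ.real (Iic x)) (t : ℝ) :
    κ (Ioi (-t)) = κ (Iic t) := by
  rw [← measureReal_eq_measureReal_iff (measure_ne_top _ _) (measure_ne_top _ _), ← compl_Iic,
    probReal_compl_eq_one_sub measurableSet_Iic, hκ, sub_sub_cancel]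

theorem measure_neg_preimage_sdiff_eq_measure_preimage_inter {Ω : Type*} [MeasurableSpace Ω]
    {μ : Measure Ω} [IsFiniteMeasure μ] {h k : Ω → ℝ} (hh : Measurable h) (hk : Measurable k)
    (hindep : IndepFun h k μ) (hneg : MeasurePreserving Neg.neg (μ.map h) (μ.map h))
    (hκ : ∀ t, μ.map k (Ioi (-t)) = μ.map k (Iic t)) (s : ℝ) {B : Set ℝ} (hB : MeasurableSet B) :
    μ ((fun ω => -h ω) ⁻¹' B \ {ω | k ω ≤ s * h ω}) = μ (h ⁻¹' B ∩ {ω | k ω ≤ s * h ω}) := by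
  have hflip : (fun ω => -h ω) ⁻¹' B \ {ω | k ω ≤ s * h ω} =
      (fun ω => (h ω, k ω)) ⁻¹' {p | s * p.1 < p.2} ∩ h ⁻¹' (-B) := by
    ext ω; simp [and_comm]
  have haccept : h ⁻¹' B ∩ {ω | k ω ≤ s * h ω} =
      (fun ω => (h ω, k ω)) ⁻¹' {p | p.2 ≤ s * p.1} ∩ h ⁻¹' B := by
    ext ω; simp [and_comm]
  rw [hflip, haccept,
    hindep.measure_preimage_inter_preimage hh hk (measurableSet_lt (by fun_prop) (by fun_prop))
      hB.neg,
    hindep.measure_preimage_inter_preimage hh hk (measurableSet_le (by fun_prop) (by fun_prop)) hB,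
    setLIntegral_neg_eq hneg]
  refine setLIntegral_congr_fun hB fun x _ => ?_
  change μ.map k (Ioi (s * -x)) = μ.map k (Iic (s * x))
  rw [mul_neg, hκ]

theorem stmt16_general
    {Ωs : Type*} [MeasurableSpace Ωs] (μ : Measure Ωs) [IsProbabilityMeasure μ]
    (h k : Ωs → ℝ) (hh : Measurable h) (hk : Measurable k)
    (hindep : IndepFun h k μ)
    (hsymm : μ.map h = μ.map (fun ω => -h ω))
    (Λ : ℝ → ℝ)
    (hΛ : ∀ x, (μ {ω | k ω ≤ x}).toReal = Λ x)
    (hΛsym : ∀ x, Λ (-x) = 1 - Λ x)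
    (s : ℝ)
    (U : Ωs → ℝ)
    (hU : U = fun ω => if k ω ≤ s * h ω then h ω else -h ω) :
    μ.map U = (μ[|{ω | k ω ≤ s * h ω}]).map h := by
  have : IsProbabilityMeasure (μ.map k) := Measure.isProbabilityMeasure_map hk.aemeasurable
  have hcdf : ∀ x, (μ.map k).real (Iic x) = Λ x := fun x => by
    rw [measureReal_def, Measure.map_apply hk measurableSet_Iic]
    exact hΛ x
  have hneg : MeasurePreserving Neg.neg (μ.map h) (μ.map h) :=
    ⟨measurable_neg, by rw [Measure.map_map measurable_neg hh]; exact hsymm.symm⟩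
  have hκ := measure_Ioi_neg_eq_measure_Iic (fun x => by rw [hcdf, hcdf, hΛsym])
  rw [hU]
  exact map_piecewise_eq_cond_map (measurableSet_le hk (hh.const_mul s)) hh hh.neg
    fun B hB => measure_neg_preimage_sdiff_eq_measure_preimage_inter hh hk hindep hneg hκ s hB

/-- accept/flip step. If `h` has a law symmetric about `0`, `k` is
independent of `h` with symmetric CDF `Λ`, `P(k = s·h) = 0`, and
`U = h` if `k ≤ s·h`, `U = −h` otherwise, then `U` is distributed as
`h | (k ≤ s·h)`. -/
theorem stmt16
    {Ωs : Type*} [MeasurableSpace Ωs] (μ : Measure Ωs) [IsProbabilityMeasure μ]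
    (h k : Ωs → ℝ) (hh : Measurable h) (hk : Measurable k)
    (hindep : IndepFun h k μ)
    (hsymm : μ.map h = μ.map (fun ω => -h ω))
    (Λ : ℝ → ℝ)
    (hΛ : ∀ x, (μ {ω | k ω ≤ x}).toReal = Λ x)
    (hΛsym : ∀ x, Λ (-x) = 1 - Λ x)
    (s : ℝ) (hs : s = 1 ∨ s = -1)
    (hnull : μ {ω | k ω = s * h ω} = 0)
    (U : Ωs → ℝ)
    (hU : U = fun ω => if k ω ≤ s * h ω then h ω else -h ω) :
    μ.map U = (μ[|{ω | k ω ≤ s * h ω}]).map h :=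
  stmt16_general μ h k hh hk hindep hsymm Λ hΛ hΛsym s U hU
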